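/- If the message space M is a countable set, then there exists a function φ : M → ℝ such that the map sending each finite multiset c over M (of cardinality at most N−1) to the sum ∑_{m ∈ c} φ(m) (counted with multiplicity) is injective on the set of such multisets. -/
import Mathlib

open Polynomial

lemma multiset_sum_indicator_count {M : Type*} [DecidableEq M] (c : Multiset M) (m : M) :
    (c.map fun m' => if m = m' then (1 : ℤ) else 0).sum = c.count m := by
  induction c using Multiset.induction with
  | empty => simp
  | cons a s ih =>
    by_cases h : m = a
    · subst h; simp [ih, add_comm]
    · simp [h, ih, Multiset.count_cons_of_ne h]

/-- GIN Lemma 5: over a countable message space there exists an embedding whose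
multiset sum is injective on multisets of cardinality at most N-1. -/
theorem exists_injective_multiset_sum_encoder (M : Type*) [Countable M] (N : ℕ) (hN : 1 ≤ N) :
    ∃ φ : M → ℝ, ∀ c c' : Multiset M,
      Multiset.card c ≤ N - 1 → Multiset.card c' ≤ N - 1 →
      (c.map φ).sum = (c'.map φ).sum → c = c' := by
  classical
  obtain ⟨e, he⟩ := Countable.exists_injective_nat M
  set x : ℝ := liouvilleNumber 3
  have hx : Transcendental ℤ x := transcendental_liouvilleNumber (by norm_num)
  refine ⟨fun m => x ^ e m, fun c c' _ _ hsum => ?_⟩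
  -- polynomials attached to multisets
  set q : Multiset M → ℤ[X] := fun c => (c.map fun m => (X : ℤ[X]) ^ e m).sum with hq
  have heval : ∀ c : Multiset M, aeval x (q c) = (c.map fun m => x ^ e m).sum := by
    intro c
    rw [hq, map_multiset_sum, Multiset.map_map]
    simp
  have hpoly : q c = q c' := by
    by_contra hne
    exact hx ⟨q c - q c', sub_ne_zero.mpr hne, by
      rw [map_sub, heval, heval, hsum, sub_self]⟩
  -- compare coefficients
  ext m
  have hcoeff : ∀ d : Multiset M, (q d).coeff (e m) = d.count m := by
    intro d
    rw [hq]
    rw [show (Multiset.map (fun m => (X : ℤ[X]) ^ e m) d).sum.coeff (e m)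
        = lcoeff ℤ (e m) (Multiset.map (fun m => (X : ℤ[X]) ^ e m) d).sum from rfl,
      map_multiset_sum, Multiset.map_map]
    have : ∀ m' : M, lcoeff ℤ (e m) ((X : ℤ[X]) ^ e m') = if m = m' then (1:ℤ) else 0 := by
      intro m'
      simp only [lcoeff_apply, coeff_X_pow]
      by_cases h : m = m'
      · simp [h]
      · rw [if_neg (show ¬ e m = e m' from fun h' => h (he h')), if_neg h]
    simp only [Function.comp_def, this]
    exact multiset_sum_indicator_count d m
  have h1 := hcoeff c
  rw [hpoly, hcoeff c'] at h1
  exact_mod_cast h1.symm
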